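/- arXiv:2603.10511 — 2 statements merged into one kernel-verified Lean document; each statement's English description precedes it below -/
import Mathlib

section
/- Let G(δ; r) := E[Π^{(1,0)}(m̃ + δ | τ) · 1{m̃ > −r}]. If Π(x|τ) = h(τ) + g(x−τ) is additively separable with difference kernel and the distribution of m̃ − τ is independent of m̃, then G(δ; r) = P(m̃ > −r) · E[g'(δ + ε_e)] where ε_e = m̃ − τ; consequently the solution δ of G(δ; r) = 0 does not depend on r. -/
open MeasureTheory ProbabilityTheory

lemma oad_aux {Ω : Type*} [MeasureSpace Ω] [IsProbabilityMeasure (ℙ : Measure Ω)]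
    (τ mtil : Ω → ℝ) (hτm : Measurable τ) (hm : Measurable mtil)
    (hind : IndepFun (fun ω => mtil ω - τ ω) mtil ℙ)
    (h g : ℝ → ℝ) (hg : Differentiable ℝ g)
    (Pi : ℝ → ℝ → ℝ) (hPi : ∀ x t, Pi x t = h t + g (x - t))
    (hint : ∀ δ : ℝ, Integrable (fun ω => deriv g (δ + (mtil ω - τ ω))) ℙ)
    (δ r : ℝ) :
    (∫ ω, Set.indicator {ω' | -r < mtil ω'}
        (fun ω' => deriv (fun x => Pi x (τ ω')) (mtil ω' + δ)) ω ∂ℙ)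
      = (ℙ {ω | -r < mtil ω}).toReal
          * ∫ ω, deriv g (δ + (mtil ω - τ ω)) ∂ℙ := by
  set X : Ω → ℝ := fun ω => deriv g (δ + (mtil ω - τ ω)) with hX
  set Y : Ω → ℝ := fun ω => Set.indicator {x : ℝ | -r < x} (fun _ => (1 : ℝ)) (mtil ω) with hY
  have hSm : MeasurableSet {x : ℝ | -r < x} := measurableSet_lt measurable_const measurable_id
  have hS : MeasurableSet {ω | -r < mtil ω} := hm hSm
  have hpt : ∀ ω, Set.indicator {ω' | -r < mtil ω'}
      (fun ω' => deriv (fun x => Pi x (τ ω')) (mtil ω' + δ)) ω = X ω * Y ω := by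
    intro ω
    have hd : (fun x => Pi x (τ ω)) = fun x => h (τ ω) + g (x - τ ω) := by
      funext x; exact hPi x (τ ω)
    have hder : deriv (fun x => Pi x (τ ω)) (mtil ω + δ) = deriv g (δ + (mtil ω - τ ω)) := by
      rw [hd]
      rw [deriv_const_add, deriv_comp_sub_const]
      ring_nf
    by_cases hω : ω ∈ {ω' | -r < mtil ω'}
    · rw [Set.indicator_of_mem hω, hder, hY]
      simp only [Set.indicator_of_mem (show mtil ω ∈ {x : ℝ | -r < x} from hω), mul_one, hX]
    · rw [Set.indicator_of_notMem hω, hY]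
      simp only [Set.indicator_of_notMem (show mtil ω ∉ {x : ℝ | -r < x} from hω), mul_zero]
  simp only [hpt]
  have hindXY : IndepFun X Y ℙ := by
    apply hind.comp (φ := fun e => deriv g (δ + e))
      (ψ := Set.indicator {x : ℝ | -r < x} (fun _ => (1 : ℝ)))
    · exact (measurable_deriv g).comp (measurable_const_add δ)
    · exact (measurable_const.indicator hSm)
  have hXint : Integrable X ℙ := hint δ
  have hYint : Integrable Y ℙ := by
    have : Y = Set.indicator {ω | -r < mtil ω} (fun _ => (1 : ℝ)) := by
      funext ω
      by_cases hω : ω ∈ {ω' | -r < mtil ω'}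
      · rw [hY]; simp [Set.indicator_of_mem hω,
          Set.indicator_of_mem (show mtil ω ∈ {x : ℝ | -r < x} from hω)]
      · rw [hY]; simp [Set.indicator_of_notMem hω,
          Set.indicator_of_notMem (show mtil ω ∉ {x : ℝ | -r < x} from hω)]
    rw [this]
    exact (integrable_const (1:ℝ)).indicator hS
  have := hindXY.integral_fun_mul_eq_mul_integral hXint.aestronglyMeasurable hYint.aestronglyMeasurable
  have hYval : ∫ ω, Y ω ∂ℙ = (ℙ {ω | -r < mtil ω}).toReal := by
    have : Y = Set.indicator {ω | -r < mtil ω} (fun _ => (1 : ℝ)) := by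
      funext ω
      by_cases hω : ω ∈ {ω' | -r < mtil ω'}
      · rw [hY]; simp [Set.indicator_of_mem hω,
          Set.indicator_of_mem (show mtil ω ∈ {x : ℝ | -r < x} from hω)]
      · rw [hY]; simp [Set.indicator_of_notMem hω,
          Set.indicator_of_notMem (show mtil ω ∉ {x : ℝ | -r < x} from hω)]
    rw [this, integral_indicator_const _ hS]
    simp [Measure.real]
  calc ∫ ω, X ω * Y ω ∂ℙ = (∫ ω, X ω ∂ℙ) * ∫ ω, Y ω ∂ℙ := this
    _ = (ℙ {ω | -r < mtil ω}).toReal * ∫ ω, X ω ∂ℙ := by rw [hYval, mul_comm]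

/-- Decoupling of the operational adjustment from the rollout threshold.
Let `G(δ; r) = E[Π^{(1,0)}(mtil + δ | τ) · 1{mtil > −r}]`. If
`Π(x|τ) = h(τ) + g(x − τ)` is additively separable with a difference kernel
and `ε_e = mtil − τ` is independent of `mtil`, then
`G(δ; r) = P(mtil > −r) · E[g'(δ + ε_e)]`; consequently, whenever the rollout
probabilities are nonzero, the solutions in `δ` of `G(δ; r) = 0` do not
depend on `r`. -/
theorem operational_adjustment_decouples
    {Ω : Type*} [MeasureSpace Ω] [IsProbabilityMeasure (ℙ : Measure Ω)]
    (τ mtil : Ω → ℝ) (hτm : Measurable τ) (hm : Measurable mtil)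
    (hind : IndepFun (fun ω => mtil ω - τ ω) mtil ℙ)
    (h g : ℝ → ℝ) (hg : Differentiable ℝ g)
    (Pi : ℝ → ℝ → ℝ) (hPi : ∀ x t, Pi x t = h t + g (x - t))
    (hint : ∀ δ : ℝ, Integrable (fun ω => deriv g (δ + (mtil ω - τ ω))) ℙ) :
    (∀ δ r : ℝ,
      (∫ ω, Set.indicator {ω' | -r < mtil ω'}
          (fun ω' => deriv (fun x => Pi x (τ ω')) (mtil ω' + δ)) ω ∂ℙ)
        = (ℙ {ω | -r < mtil ω}).toReal
            * ∫ ω, deriv g (δ + (mtil ω - τ ω)) ∂ℙ) ∧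
    (∀ δ r r' : ℝ, ℙ {ω | -r < mtil ω} ≠ 0 → ℙ {ω | -r' < mtil ω} ≠ 0 →
      ((∫ ω, Set.indicator {ω' | -r < mtil ω'}
          (fun ω' => deriv (fun x => Pi x (τ ω')) (mtil ω' + δ)) ω ∂ℙ) = 0 ↔
       (∫ ω, Set.indicator {ω' | -r' < mtil ω'}
          (fun ω' => deriv (fun x => Pi x (τ ω')) (mtil ω' + δ)) ω ∂ℙ) = 0)) := by
  have key := oad_aux τ mtil hτm hm hind h g hg Pi hPi hint
  refine ⟨key, fun δ r r' hr hr' => ?_⟩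
  rw [key δ r, key δ r']
  have h1 : (ℙ {ω | -r < mtil ω}).toReal ≠ 0 :=
    ENNReal.toReal_ne_zero.mpr ⟨hr, measure_ne_top _ _⟩
  have h2 : (ℙ {ω | -r' < mtil ω}).toReal ≠ 0 :=
    ENNReal.toReal_ne_zero.mpr ⟨hr', measure_ne_top _ _⟩
  constructor <;> intro hz
  · rcases mul_eq_zero.mp hz with hc | hc
    · exact absurd hc h1
    · rw [hc, mul_zero]
  · rcases mul_eq_zero.mp hz with hc | hc
    · exact absurd hc h2
    · rw [hc, mul_zero]
end

section
/- For the newsvendor surrogate net reward Π(x|τ) = n{pτ − (c_u+c_o)σ[φ(z₁) − φ(z_CR)] − (c_u+c_o)σ z₁ Φ(z₁) + c_u σ z₁} with z₁ = z_CR + (x−τ)/σ, the second partial derivative with respect to τ equals −n(c_u+c_o)φ(z₁)/σ < 0 for all x, τ; hence Π(x|·) is strictly concave in τ. -/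
open Real

/-- Standard normal pdf. -/
noncomputable def normalPdf (x : ℝ) : ℝ :=
  (Real.sqrt (2 * Real.pi))⁻¹ * Real.exp (-(x ^ 2) / 2)

/-- Standard normal cdf. -/
noncomputable def normalCdf (x : ℝ) : ℝ := ∫ t in Set.Iic x, normalPdf t

lemma normalPdf_pos (x : ℝ) : 0 < normalPdf x := by
  have h2π : 0 < Real.sqrt (2 * Real.pi) :=
    Real.sqrt_pos.2 (by positivity)
  exact mul_pos (inv_pos.2 h2π) (Real.exp_pos _)

lemma continuous_normalPdf : Continuous normalPdf := by
  unfold normalPdf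
  continuity

lemma integrable_normalPdf : MeasureTheory.Integrable normalPdf := by
  have h : normalPdf = fun x => (Real.sqrt (2 * Real.pi))⁻¹ * Real.exp (-(1/2 : ℝ) * x ^ 2) := by
    funext x; unfold normalPdf; ring_nf
  rw [h]
  exact (integrable_exp_neg_mul_sq (by norm_num : (0:ℝ) < 1/2)).const_mul _

lemma hasDerivAt_normalPdf (x : ℝ) : HasDerivAt normalPdf (-x * normalPdf x) x := by
  have h1 : HasDerivAt (fun y : ℝ => -(y ^ 2) / 2) (-x) x := by
    have := ((hasDerivAt_pow 2 x).neg).div_const 2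
    simpa using this.congr_deriv (by ring)
  have h2 := h1.exp
  have h3 := h2.const_mul (Real.sqrt (2 * Real.pi))⁻¹
  have h4 : HasDerivAt normalPdf ((Real.sqrt (2 * Real.pi))⁻¹ * (Real.exp (-(x^2)/2) * (-x))) x := h3
  convert h4 using 1
  unfold normalPdf; ring

lemma hasDerivAt_normalCdf (x : ℝ) : HasDerivAt normalCdf (normalPdf x) x := by
  have hInt : ∀ a b : ℝ, IntervalIntegrable normalPdf MeasureTheory.volume a b :=
    fun a b => integrable_normalPdf.intervalIntegrable
  have key : HasDerivAt (fun u => ∫ t in (0:ℝ)..u, normalPdf t) (normalPdf x) x :=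
    intervalIntegral.integral_hasDerivAt_right (hInt 0 x)
      (continuous_normalPdf.stronglyMeasurable.stronglyMeasurableAtFilter)
      continuous_normalPdf.continuousAt
  have heq : ∀ u : ℝ, normalCdf u = (∫ t in (0:ℝ)..u, normalPdf t) + normalCdf 0 := by
    intro u
    have := intervalIntegral.integral_Iic_sub_Iic
      (integrable_normalPdf.integrableOn (s := Set.Iic 0))
      (integrable_normalPdf.integrableOn (s := Set.Iic u))
    unfold normalCdf
    linarith [this]
  have : HasDerivAt (fun u => (∫ t in (0:ℝ)..u, normalPdf t) + normalCdf 0)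
      (normalPdf x) x := key.add_const _
  exact this.congr_of_eventuallyEq (Filter.Eventually.of_forall fun u => (heq u))

/-- Newsvendor SNR concavity in the true effect: for
`Π(x|τ) = n{pτ − (c_u+c_o)σ[φ(z₁) − φ(z_CR)] − (c_u+c_o)σ z₁ Φ(z₁) + c_u σ z₁}`
with `z₁ = z_CR + (x−τ)/σ`, one has
`∂²Π/∂τ² = −n(c_u+c_o)φ(z₁)/σ < 0` for all `x, τ`; hence `Π(x|·)` is strictly
concave in `τ`. -/
theorem newsvendor_concave_in_tau
    (n : ℕ) (hn : 1 ≤ n) (p cu co σ zCR : ℝ)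
    (hp : 0 < p) (hcu : 0 < cu) (hco : 0 < co) (hσ : 0 < σ)
    (hzCR : normalCdf zCR = cu / (cu + co))
    (Pi : ℝ → ℝ → ℝ)
    (hPi : ∀ x t, Pi x t =
      (n : ℝ) * (p * t
        - (cu + co) * σ * (normalPdf (zCR + (x - t) / σ) - normalPdf zCR)
        - (cu + co) * σ * (zCR + (x - t) / σ) * normalCdf (zCR + (x - t) / σ)
        + cu * σ * (zCR + (x - t) / σ))) :
    ∀ x τ : ℝ,
      iteratedDeriv 2 (fun t => Pi x t) τ
        = -(n : ℝ) * (cu + co) * normalPdf (zCR + (x - τ) / σ) / σ ∧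
      iteratedDeriv 2 (fun t => Pi x t) τ < 0 ∧
      StrictConcaveOn ℝ Set.univ (fun t => Pi x t) := by
  intro x τ
  have hσ' : σ ≠ 0 := ne_of_gt hσ
  -- derivative of z₁ with respect to t
  have hg : ∀ t : ℝ, HasDerivAt (fun t => zCR + (x - t) / σ) (-1 / σ) t := by
    intro t
    have h1 : HasDerivAt (fun t : ℝ => x - t) (-1) t := by
      simpa using (hasDerivAt_id t).const_sub x
    simpa using (h1.div_const σ).const_add zCR
  -- first derivative
  have hf' : ∀ t : ℝ, HasDerivAt (fun t => Pi x t)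
      ((n : ℝ) * ((cu + co) * normalCdf (zCR + (x - t) / σ) + (p - cu))) t := by
    intro t
    have hφ : HasDerivAt (fun t => normalPdf (zCR + (x - t) / σ))
        ((-(zCR + (x - t) / σ) * normalPdf (zCR + (x - t) / σ)) * (-1 / σ)) t :=
      (hasDerivAt_normalPdf _).comp t (hg t)
    have hΦ : HasDerivAt (fun t => normalCdf (zCR + (x - t) / σ))
        (normalPdf (zCR + (x - t) / σ) * (-1 / σ)) t :=
      (hasDerivAt_normalCdf _).comp t (hg t)
    have h1 : HasDerivAt (fun t : ℝ => p * t) p t := by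
      simpa using (hasDerivAt_id t).const_mul p
    have h2 : HasDerivAt
        (fun t => (cu + co) * σ * (normalPdf (zCR + (x - t) / σ) - normalPdf zCR))
        ((cu + co) * σ * ((-(zCR + (x - t) / σ) * normalPdf (zCR + (x - t) / σ)) * (-1 / σ))) t :=
      (hφ.sub_const _).const_mul _
    have h3 : HasDerivAt
        (fun t => (cu + co) * σ * (zCR + (x - t) / σ) * normalCdf (zCR + (x - t) / σ))
        ((cu + co) * σ * (-1 / σ) * normalCdf (zCR + (x - t) / σ)
          + (cu + co) * σ * (zCR + (x - t) / σ) * (normalPdf (zCR + (x - t) / σ) * (-1 / σ))) t :=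
      (((hg t).const_mul ((cu + co) * σ)).mul hΦ)
    have h4 : HasDerivAt (fun t => cu * σ * (zCR + (x - t) / σ)) (cu * σ * (-1 / σ)) t :=
      (hg t).const_mul _
    have h5 := (((h1.sub h2).sub h3).add h4).const_mul (n : ℝ)
    have heq : (fun t => Pi x t) = fun t =>
        (n : ℝ) * (p * t
          - (cu + co) * σ * (normalPdf (zCR + (x - t) / σ) - normalPdf zCR)
          - (cu + co) * σ * (zCR + (x - t) / σ) * normalCdf (zCR + (x - t) / σ)
          + cu * σ * (zCR + (x - t) / σ)) := funext fun t => hPi x t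
    rw [heq]
    refine h5.congr_deriv ?_
    field_simp
    ring
  have hderiv : deriv (fun t => Pi x t) =
      fun t => (n : ℝ) * ((cu + co) * normalCdf (zCR + (x - t) / σ) + (p - cu)) :=
    funext fun t => (hf' t).deriv
  -- second derivative
  have hf'' : ∀ t : ℝ, HasDerivAt
      (fun t => (n : ℝ) * ((cu + co) * normalCdf (zCR + (x - t) / σ) + (p - cu)))
      (-(n : ℝ) * (cu + co) * normalPdf (zCR + (x - t) / σ) / σ) t := by
    intro t
    have hΦ : HasDerivAt (fun t => normalCdf (zCR + (x - t) / σ))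
        (normalPdf (zCR + (x - t) / σ) * (-1 / σ)) t :=
      (hasDerivAt_normalCdf _).comp t (hg t)
    have h := ((hΦ.const_mul (cu + co)).add_const (p - cu)).const_mul (n : ℝ)
    refine h.congr_deriv ?_
    ring
  have hderiv2 : ∀ t : ℝ, deriv (deriv (fun t => Pi x t)) t
      = -(n : ℝ) * (cu + co) * normalPdf (zCR + (x - t) / σ) / σ := by
    intro t
    rw [hderiv]
    exact (hf'' t).deriv
  have hiter : iteratedDeriv 2 (fun t => Pi x t) τ
      = -(n : ℝ) * (cu + co) * normalPdf (zCR + (x - τ) / σ) / σ := by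
    rw [show (2:ℕ) = 1 + 1 from rfl, iteratedDeriv_succ, iteratedDeriv_one]
    exact hderiv2 τ
  have hn' : (0:ℝ) < n := by exact_mod_cast Nat.lt_of_lt_of_le Nat.zero_lt_one hn
  have hneg : ∀ t : ℝ, -(n : ℝ) * (cu + co) * normalPdf (zCR + (x - t) / σ) / σ < 0 := by
    intro t
    have hφ := normalPdf_pos (zCR + (x - t) / σ)
    have hcc : 0 < cu + co := by linarith
    have hpos : 0 < (n : ℝ) * (cu + co) * normalPdf (zCR + (x - t) / σ) / σ := by positivity
    rw [neg_mul, neg_mul, neg_div]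
    linarith
  refine ⟨hiter, hiter ▸ hneg τ, ?_⟩
  have hcont : Continuous (fun t => Pi x t) :=
    continuous_iff_continuousAt.2 fun t => (hf' t).differentiableAt.continuousAt
  apply strictConcaveOn_of_deriv2_neg convex_univ hcont.continuousOn
  · intro t _
    have : deriv^[2] (fun t => Pi x t) t = deriv (deriv (fun t => Pi x t)) t := by
      simp [Function.iterate_succ, Function.iterate_one]
    rw [this, hderiv2 t]
    exact hneg t
end
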